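/- The expected size of the matching produced by the randomized greedy algorithm on the triangular instance M* (equivalently, E[T] for the death process) is at most ⌈(1-1/e)·n + 2 - 1/e⌉ for every n ≥ 1. -/

import Mathlib

/-!
With `αₜ = Pr[Yₜ ≥ 1]` and `δₜ = E[Yₜ]` we have `E[T] = ∑ₜ αₜ`, `αₜ ≤ min(δₜ, 1)`, and one step
of the process gives `δₜ₊₁ = (1 - 1/(n-t+1)) (δₜ - αₜ)`, since the double step from `y` has
probability `(y-1)/(n-t+1)`. For any solution of these constraints the recursion telescopes to
`∑ αₜ ≤ n - ∑_{t<n} δₜ₊₁ / (n-t)`, while `αₜ ≤ 1` forces `δₜ ≥ k (1 + log (k/n))` with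
`k = n-t+1` steps left. So `∑ αₜ ≤ n - ∑_{m<n} max(0, 1 + log (m/n))`, and comparing the last
sum with `∫₀ⁿ max(0, 1 + log (x/n)) dx = n/e` gives `E[T] ≤ (1 - 1/e) n + 1`.
-/

open Finset Real MeasureTheory

theorem mul_log_sub_log_le {a b : ℝ} (ha : 0 < a) (hb : 0 < b) :
    a * (log b - log a) ≤ b - a := by
  have h := log_le_sub_one_of_pos (div_pos hb ha)
  rw [log_div hb.ne' ha.ne', le_sub_iff_add_le, le_div_iff₀ ha] at h
  linarith

/-- A primitive of `x ↦ max 0 (1 + log x - log c)`; it is convex, so its increment over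
`[x - 1, x]` is at most the integrand at `x`. -/
noncomputable def clippedEntropy (c x : ℝ) : ℝ :=
  max x (c / exp 1) * (log (max x (c / exp 1)) - log c)

theorem mul_log_sub_mul_log_le {a b c : ℝ} (ha : 0 < a) (hb : 0 < b) :
    b * (log b - log c) - a * (log a - log c) ≤ (b - a) * (1 + log b - log c) := by
  linear_combination mul_log_sub_log_le ha hb

theorem clippedEntropy_sub_le {c : ℝ} (hc : 0 < c) (x : ℝ) :
    clippedEntropy c x - clippedEntropy c (x - 1) ≤ max 0 (1 + log x - log c) := by
  have hce : 0 < c / exp 1 := div_pos hc (exp_pos 1)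
  have hlog : log (c / exp 1) = log c - 1 := by
    rw [log_div hc.ne' (exp_pos 1).ne', log_exp]
  unfold clippedEntropy
  refine (mul_log_sub_mul_log_le (lt_max_of_lt_right hce) (lt_max_of_lt_right hce)).trans ?_
  rcases le_or_gt x (c / exp 1) with hx | hx
  · rw [max_eq_right hx, max_eq_right (by linarith)]
    simp
  · have hslope : 0 ≤ 1 + log x - log c := by
      linarith [log_le_log hce hx.le]
    rw [max_eq_left hx.le]
    refine le_max_of_le_right (mul_le_of_le_one_left hslope ?_)
    linarith [le_max_left (x - 1) (c / exp 1)]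

theorem div_exp_one_sub_one_le_sum {c : ℝ} (hc : 0 < c) {N : ℕ} (hN : c ≤ N + 1) :
    c / exp 1 - 1 ≤ ∑ i ∈ range N, max 0 (1 + log (N - i) - log c) := by
  have hce : 0 < c / exp 1 := div_pos hc (exp_pos 1)
  have htel : clippedEntropy c N - clippedEntropy c 0 ≤
      ∑ i ∈ range N, max 0 (1 + log (N - i) - log c) := by
    have := sum_range_sub' (fun i : ℕ => clippedEntropy c (N - i)) N
    simp only [Nat.cast_zero, sub_zero, sub_self] at this
    rw [← this]
    refine sum_le_sum fun i _ => ?_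
    simpa [sub_sub] using clippedEntropy_sub_le hc (N - i)
  have hstart : clippedEntropy c 0 = -(c / exp 1) := by
    rw [clippedEntropy, max_eq_right hce.le, log_div hc.ne' (exp_pos 1).ne', log_exp]
    ring
  have hend : -1 ≤ clippedEntropy c N := by
    have hx : 0 < max (N : ℝ) (c / exp 1) := lt_max_of_lt_right hce
    have := mul_log_sub_log_le hx hc
    have := le_max_left (N : ℝ) (c / exp 1)
    rw [clippedEntropy]
    linarith
  linarith

theorem one_le_natCast_sub_natCast {i n : ℕ} (hi : i < n) : (1 : ℝ) ≤ n - i := by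
  rw [le_sub_iff_add_le']
  exact_mod_cast hi

theorem one_sub_one_div_nonneg {i n : ℕ} (hi : i < n) : 0 ≤ 1 - 1 / ((n : ℝ) - i) := by
  have := one_le_natCast_sub_natCast hi
  exact sub_nonneg.2 (div_le_one_of_le₀ this (by linarith))

/-- The paper's LP, with index `i` standing for time `t = i + 1`. -/
structure LPFeasible (n : ℕ) (α δ : ℕ → ℝ) : Prop where
  init : δ 0 = n
  le_one : ∀ i < n, α i ≤ 1
  le_delta : ∀ i < n, α i ≤ δ i
  succ : ∀ i < n, δ (i + 1) = (1 - 1 / (n - i)) * (δ i - α i)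

namespace LPFeasible

variable {n : ℕ} {α δ : ℕ → ℝ}

theorem nonneg (h : LPFeasible n α δ) : ∀ i ≤ n, 0 ≤ δ i := by
  intro i hi
  induction i with
  | zero => simp [h.init]
  | succ i ih =>
    rw [h.succ i hi]
    exact mul_nonneg (one_sub_one_div_nonneg hi) (sub_nonneg.2 (h.le_delta i hi))

theorem lower_bound (h : LPFeasible n α δ) :
    ∀ i ≤ n, (n - i) * (1 + log (n - i) - log n) ≤ δ i := by
  intro i hi
  induction i with
  | zero => simp [h.init]
  | succ i ih =>
    have hk := one_le_natCast_sub_natCast hi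
    rw [h.succ i hi, Nat.cast_succ, ← sub_sub]
    set k : ℝ := n - i
    -- `log k - log (k - 1) ≥ 1 / k` pays for the loss `α i ≤ 1`
    have hdrop : (k - 1) / k ≤ (k - 1) * (log k - log (k - 1)) := by
      rcases hk.eq_or_lt with hk1 | hk1
      · rw [← hk1]; simp
      · have := mul_log_sub_log_le (by linarith : 0 < k) (by linarith : 0 < k - 1)
        rw [div_le_iff₀ (by linarith)]
        nlinarith
    have hexpand : (1 - 1 / k) * (k * (1 + log k - log n) - 1)
        = (k - 1) * (1 + log k - log n) - (k - 1) / k := by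
      field_simp
    calc (k - 1) * (1 + log (k - 1) - log n)
        ≤ (1 - 1 / k) * (k * (1 + log k - log n) - 1) := by
          rw [hexpand]; linarith
      _ ≤ (1 - 1 / k) * (δ i - α i) := by
          refine mul_le_mul_of_nonneg_left ?_ (one_sub_one_div_nonneg hi)
          linarith [ih (by omega), h.le_one i hi]

theorem le_sub_sub (h : LPFeasible n α δ) {i : ℕ} (hi : i + 1 < n) :
    α i ≤ δ i - δ (i + 1) - max 0 (1 + log (n - (i + 1)) - log n) := by
  have hk : (0 : ℝ) < n - (i + 1) := by
    have := one_le_natCast_sub_natCast hi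
    push_cast at this
    linarith
  have hgain : max 0 (1 + log (n - (i + 1)) - log n) ≤ δ (i + 1) / (n - (i + 1)) := by
    refine max_le (div_nonneg (h.nonneg (i + 1) hi.le) hk.le) ?_
    rw [le_div_iff₀ hk, mul_comm]
    exact_mod_cast h.lower_bound (i + 1) hi.le
  have hsplit : δ i - α i = δ (i + 1) + δ (i + 1) / (n - (i + 1)) := by
    have : (n : ℝ) - i ≠ 0 := by linarith
    rw [h.succ i (by omega)]
    field_simp
    ring
  linarith

theorem sum_le (h : LPFeasible n α δ) : ∑ i ∈ range n, α i ≤ (1 - 1 / exp 1) * n + 1 := by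
  cases n with
  | zero => simp
  | succ N =>
    have hsteps : ∑ i ∈ range N, α i ≤
        ∑ i ∈ range N, ((δ i - δ (i + 1)) - max 0 (1 + log (N - i) - log (N + 1))) := by
      refine sum_le_sum fun i hi => ?_
      simpa using h.le_sub_sub (i := i) (by simpa using hi)
    rw [sum_sub_distrib, sum_range_sub', h.init] at hsteps
    have hpot := div_exp_one_sub_one_le_sum (c := N + 1) (N := N) (by positivity) le_rfl
    have hlast := h.le_delta N (by omega)
    rw [sum_range_succ]
    push_cast at hsteps ⊢
    linarith [show (1 - 1 / exp 1) * (N + 1) = N + 1 - (N + 1) / exp 1 by ring]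

end LPFeasible

section DeathSequence

variable {f : ℕ → ℕ} {n : ℕ}

theorem add_le_of_death_step (h0 : f 0 ≤ n)
    (hf : ∀ i < n, f (i + 1) = f i - 1 ∨ f (i + 1) = f i - 2) : ∀ i ≤ n, f i + i ≤ n := by
  intro i hi
  induction i with
  | zero => simpa using h0
  | succ i ih => rcases hf i hi with h | h <;> have := ih (by omega) <;> omega

theorem sInf_eq_card_of_death_step (h0 : f 0 ≤ n)
    (hf : ∀ i < n, f (i + 1) = f i - 1 ∨ f (i + 1) = f i - 2) :
    sInf {i | f i = 0} = #{i ∈ range n | f i ≠ 0} := by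
  have hn : f n = 0 := by have := add_le_of_death_step h0 hf n le_rfl; omega
  have habsorb : ∀ i j, i ≤ j → j ≤ n → f i = 0 → f j = 0 := by
    intro i j hij
    induction j, hij using Nat.le_induction with
    | base => exact fun _ h => h
    | succ j _ ih => intro hj h; rcases hf j hj with h' | h' <;> rw [h', ih (by omega) h]
  set T := sInf {i | f i = 0}
  have hT : f T = 0 := Nat.sInf_mem (s := {i | f i = 0}) ⟨n, hn⟩
  have hTn : T ≤ n := Nat.sInf_le hn
  have hfilter : {i ∈ range n | f i ≠ 0} = range T := by
    ext i
    simp only [mem_filter, mem_range]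
    constructor
    · rintro ⟨hi, hfi⟩
      by_contra hTi
      exact hfi (habsorb T i (by omega) hi.le hT)
    · exact fun hi => ⟨by omega, Nat.notMem_of_lt_sInf (s := {i | f i = 0}) hi⟩
  rw [hfilter, card_range]

end DeathSequence

section Expectation

variable {Ω : Type*} [MeasurableSpace Ω] {μ : Measure Ω} [IsFiniteMeasure μ]
  {X : Ω → ℕ} {N : ℕ}

theorem integrable_natCast_of_le (hX : Measurable X) (hN : ∀ ω, X ω ≤ N) :
    Integrable (fun ω => (X ω : ℝ)) μ :=
  .of_bound (measurable_from_nat.comp hX).aestronglyMeasurable N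
    (ae_of_all _ fun ω => by simpa using hN ω)

theorem integral_comp_eq_sum (hX : Measurable X) (hN : ∀ ω, X ω ≤ N) (g : ℕ → ℝ) :
    ∫ ω, g (X ω) ∂μ = ∑ y ∈ range (N + 1), g y * μ.real {ω | X ω = y} := by
  have hfib : ∀ y, MeasurableSet {ω | X ω = y} := fun y => hX (measurableSet_singleton y)
  have hpt : ∀ ω, g (X ω) = ∑ y ∈ range (N + 1), {ω | X ω = y}.indicator (fun _ => g y) ω := by
    intro ω
    simp [Set.indicator_apply, Nat.lt_succ_of_le (hN ω)]
  simp_rw [hpt]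
  rw [integral_finsetSum _ fun y _ => (integrable_const _).indicator (hfib y)]
  refine sum_congr rfl fun y _ => ?_
  rw [integral_indicator_const _ (hfib y), smul_eq_mul, mul_comm]

theorem measureReal_eq_sum_inter (hX : Measurable X) (hN : ∀ ω, X ω ≤ N) {s : Set Ω}
    (hs : MeasurableSet s) :
    μ.real s = ∑ y ∈ range (N + 1), μ.real (s ∩ {ω | X ω = y}) := by
  have hcover : s = ⋃ y ∈ range (N + 1), s ∩ {ω | X ω = y} := by
    ext ω
    simp [hN]
  conv_lhs => rw [hcover]
  refine measureReal_biUnion_finset ?_ fun y _ => hs.inter (hX (measurableSet_singleton y))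
  exact (Set.pairwiseDisjoint_fiber X _).mono fun y => Set.inter_subset_right

theorem measureReal_ne_zero_le_integral (hX : Measurable X) (hN : ∀ ω, X ω ≤ N) :
    μ.real {ω | X ω ≠ 0} ≤ ∫ ω, (X ω : ℝ) ∂μ := by
  have hpos : MeasurableSet {ω | X ω ≠ 0} := hX (.of_discrete : MeasurableSet {y : ℕ | y ≠ 0})
  rw [← integral_indicator_one hpos]
  refine integral_mono ((integrable_const 1).indicator hpos) (integrable_natCast_of_le hX hN)
    fun ω => ?_
  by_cases hω : X ω = 0 <;> simp [hω, Nat.one_le_iff_ne_zero]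

theorem integral_card_filter {ι : Type*} (s : Finset ι) (P : ι → Ω → Prop)
    [∀ i ω, Decidable (P i ω)] (hP : ∀ i, MeasurableSet {ω | P i ω}) :
    ∫ ω, (#{i ∈ s | P i ω} : ℝ) ∂μ = ∑ i ∈ s, μ.real {ω | P i ω} := by
  have hpt : ∀ ω, (#{i ∈ s | P i ω} : ℝ) = ∑ i ∈ s, {ω | P i ω}.indicator 1 ω := by
    intro ω
    simp [Set.indicator_apply]
  simp_rw [hpt]
  rw [integral_finsetSum _ fun i _ => (integrable_const 1).indicator (hP i)]
  exact sum_congr rfl fun i _ => integral_indicator_one (hP i)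

/-- `X' = (X - 1) - 1_D` for the double-step event `D`, and `Pr[D] = E[X - 1] / k`. -/
theorem integral_death_step {X' : Ω → ℕ} (hX : Measurable X) (hX' : Measurable X')
    (hN : ∀ ω, X ω ≤ N) {k : ℝ} (hk : 0 < k) (hstep : ∀ ω, X' ω = X ω - 1 ∨ X' ω = X ω - 2)
    (hjump : ∀ y, 2 ≤ y → μ {ω | X ω = y ∧ X' ω = y - 2} =
      ENNReal.ofReal (((y : ℝ) - 1) / k) * μ {ω | X ω = y}) :
    ∫ ω, (X' ω : ℝ) ∂μ = (1 - 1 / k) * (∫ ω, (X ω : ℝ) ∂μ - μ.real {ω | X ω ≠ 0}) := by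
  set D := {ω | 2 ≤ X ω ∧ X' ω = X ω - 2}
  have hpair : Measurable fun ω => (X ω, X' ω) := hX.prodMk hX'
  have hD : MeasurableSet D :=
    hpair (.of_discrete : MeasurableSet {p : ℕ × ℕ | 2 ≤ p.1 ∧ p.2 = p.1 - 2})
  have hpos : MeasurableSet {ω | X ω ≠ 0} := hX (.of_discrete : MeasurableSet {y : ℕ | y ≠ 0})
  have hind : ∀ {s : Set Ω}, MeasurableSet s → Integrable (s.indicator (1 : Ω → ℝ)) μ :=
    fun hs => (integrable_const 1).indicator hs
  have hpred_int : Integrable (fun ω => ((X ω - 1 : ℕ) : ℝ)) μ :=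
    integrable_natCast_of_le ((measurable_from_nat (f := fun y => y - 1)).comp hX)
      fun ω => (Nat.sub_le _ _).trans (hN ω)
  have hnext : ∀ ω, (X' ω : ℝ) = ((X ω - 1 : ℕ) : ℝ) - D.indicator 1 ω := by
    intro ω
    by_cases hω : ω ∈ D
    · have : X ω - 1 = X' ω + 1 := by obtain ⟨_, _⟩ := hω; omega
      simp [hω, this]
    · have : X' ω = X ω - 1 := by
        simp only [D, Set.mem_ofPred_eq, not_and] at hω
        rcases hstep ω with h | h <;> omega
      simp [hω, this]
  have hpred : ∀ ω, ((X ω - 1 : ℕ) : ℝ) = X ω - {ω | X ω ≠ 0}.indicator 1 ω := by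
    intro ω
    by_cases hω : X ω = 0 <;> simp [hω, Nat.cast_sub (Nat.one_le_iff_ne_zero.2 _)]
  have hjumps : μ.real D = 1 / k * ∫ ω, ((X ω - 1 : ℕ) : ℝ) ∂μ := by
    rw [measureReal_eq_sum_inter hX hN hD, integral_comp_eq_sum hX hN (fun y => ((y - 1 : ℕ) : ℝ)),
      mul_sum]
    refine sum_congr rfl fun y _ => ?_
    rcases lt_or_ge y 2 with hy | hy
    · have hempty : D ∩ {ω | X ω = y} = ∅ := by
        ext ω
        simp only [D, Set.mem_inter_iff, Set.mem_ofPred_eq, Set.mem_empty_iff_false, iff_false]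
        omega
      simp [hempty, show y - 1 = 0 by omega]
    · have hfib : D ∩ {ω | X ω = y} = {ω | X ω = y ∧ X' ω = y - 2} := by
        ext ω
        simp only [D, Set.mem_inter_iff, Set.mem_ofPred_eq]
        constructor <;> rintro ⟨h1, h2⟩ <;> subst_vars <;> omega
      have hy1 : (1 : ℝ) ≤ y := by exact_mod_cast (by omega : 1 ≤ y)
      rw [hfib, measureReal_def, hjump y hy, ENNReal.toReal_mul,
        ENNReal.toReal_ofReal (div_nonneg (by linarith) hk.le), ← measureReal_def,
        Nat.cast_sub (by omega : 1 ≤ y)]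
      ring
  calc ∫ ω, (X' ω : ℝ) ∂μ
      = ∫ ω, ((X ω - 1 : ℕ) : ℝ) ∂μ - μ.real D := by
        rw [integral_congr_ae (ae_of_all _ hnext),
          integral_sub hpred_int (hind hD), integral_indicator_one hD]
    _ = (1 - 1 / k) * (∫ ω, (X ω : ℝ) ∂μ - μ.real {ω | X ω ≠ 0}) := by
        rw [hjumps, integral_congr_ae (ae_of_all _ hpred),
          integral_sub (integrable_natCast_of_le hX hN) (hind hpos),
          integral_indicator_one hpos]
        ring

theorem LPFeasible.of_death_process [IsProbabilityMeasure μ] {n : ℕ} {Z : ℕ → Ω → ℕ}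
    (hZ : ∀ i, Measurable (Z i)) (h0 : ∀ ω, Z 0 ω = n)
    (hstep : ∀ ω, ∀ i < n, Z (i + 1) ω = Z i ω - 1 ∨ Z (i + 1) ω = Z i ω - 2)
    (hjump : ∀ i < n, ∀ y, 2 ≤ y → μ {ω | Z i ω = y ∧ Z (i + 1) ω = y - 2} =
      ENNReal.ofReal (((y : ℝ) - 1) / (n - i)) * μ {ω | Z i ω = y}) :
    LPFeasible n (fun i => μ.real {ω | Z i ω ≠ 0}) (fun i => ∫ ω, (Z i ω : ℝ) ∂μ) := by
  have hbound : ∀ i ≤ n, ∀ ω, Z i ω ≤ n := fun i hi ω =>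
    (Nat.le_add_right _ _).trans (add_le_of_death_step (f := (Z · ω)) (h0 ω).le (hstep ω) i hi)
  refine ⟨by simp [h0], fun _ _ => measureReal_le_one,
    fun i hi => measureReal_ne_zero_le_integral (hZ i) (hbound i hi.le), fun i hi => ?_⟩
  have hk : (0 : ℝ) < n - i := by linarith [one_le_natCast_sub_natCast hi]
  exact integral_death_step (hZ i) (hZ (i + 1)) (hbound i hi.le) hk (hstep · i hi) (hjump i hi)

end Expectation

theorem stmt_17_general {Ω : Type*} [MeasurableSpace Ω] (μ : MeasureTheory.Measure Ω)
    [MeasureTheory.IsProbabilityMeasure μ]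
    (n : ℕ) (hn : 1 ≤ n) (Y : ℕ → Ω → ℕ)
    (hmeas : ∀ t, Measurable (Y t))
    (hY1 : ∀ ω, Y 1 ω = n)
    (hstep : ∀ ω, ∀ t, 1 ≤ t → t ≤ n →
      (1 ≤ Y t ω → Y (t + 1) ω = Y t ω - 1 ∨ Y (t + 1) ω = Y t ω - 2) ∧
      (Y t ω = 0 → Y (t + 1) ω = 0))
    (hprob2 : ∀ t y, 1 ≤ t → t ≤ n → 2 ≤ y →
      μ {ω | Y t ω = y ∧ Y (t + 1) ω = y - 2} =
        ENNReal.ofReal (((y : ℝ) - 1) / ((n : ℝ) - t + 1)) * μ {ω | Y t ω = y})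
    (T : Ω → ℕ) (hT : ∀ ω, T ω = sInf {t | 1 ≤ t ∧ Y (t + 1) ω = 0}) :
    (∫ ω, ((T ω : ℝ)) ∂μ) ≤
      (⌈(1 - 1 / Real.exp 1) * n + 2 - 1 / Real.exp 1⌉₊ : ℝ) := by
  have hnext : ∀ ω, ∀ i < n,
      Y (i + 1 + 1) ω = Y (i + 1) ω - 1 ∨ Y (i + 1 + 1) ω = Y (i + 1) ω - 2 := by
    intro ω i hi
    obtain ⟨hpos, hzero⟩ := hstep ω (i + 1) (by omega) hi
    rcases Nat.eq_zero_or_pos (Y (i + 1) ω) with h | h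
    · simp [h, hzero h]
    · exact hpos h
  have hcount : ∀ ω, T ω = #{i ∈ range n | Y (i + 1) ω ≠ 0} := by
    intro ω
    rw [hT ω, ← sInf_eq_card_of_death_step (f := fun i => Y (i + 1) ω) (hY1 ω).le (hnext ω)]
    congr 1
    ext (_ | i) <;> simp [hY1 ω]
    omega
  have hfeas := LPFeasible.of_death_process (μ := μ) (Z := fun i => Y (i + 1)) (fun i => hmeas _)
    hY1 hnext fun i hi y hy => by
      rw [hprob2 (i + 1) y (by omega) hi hy]
      push_cast
      ring_nf
  calc ∫ ω, (T ω : ℝ) ∂μ = ∑ i ∈ range n, μ.real {ω | Y (i + 1) ω ≠ 0} := by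
        simp_rw [hcount]
        exact integral_card_filter _ _ fun i => hmeas _ (.of_discrete : MeasurableSet {y | y ≠ 0})
    _ ≤ (1 - 1 / exp 1) * n + 1 := hfeas.sum_le
    _ ≤ _ := by
      have : 1 / exp 1 ≤ 1 := div_le_one_of_le₀ (one_le_exp zero_le_one) (exp_pos 1).le
      exact (by linarith : _ ≤ (1 - 1 / exp 1) * n + 2 - 1 / exp 1).trans (Nat.le_ceil _)

/-- The expected matching size of RGA on the triangular instance, i.e. E[T]
    for the death process, is at most ⌈(1-1/e)·n + 2 - 1/e⌉. -/
theorem stmt_17 {Ω : Type*} [MeasurableSpace Ω] (μ : MeasureTheory.Measure Ω)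
    [MeasureTheory.IsProbabilityMeasure μ]
    (n : ℕ) (hn : 1 ≤ n) (Y : ℕ → Ω → ℕ)
    (hmeas : ∀ t, Measurable (Y t))
    (hY1 : ∀ ω, Y 1 ω = n)
    (hstep : ∀ ω, ∀ t, 1 ≤ t → t ≤ n →
      (1 ≤ Y t ω → Y (t + 1) ω = Y t ω - 1 ∨ Y (t + 1) ω = Y t ω - 2) ∧
      (Y t ω = 0 → Y (t + 1) ω = 0))
    (hprob2 : ∀ t y, 1 ≤ t → t ≤ n → 2 ≤ y →
      μ {ω | Y t ω = y ∧ Y (t + 1) ω = y - 2} =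
        ENNReal.ofReal (((y : ℝ) - 1) / ((n : ℝ) - t + 1)) * μ {ω | Y t ω = y})
    (hprob1 : ∀ t y, 1 ≤ t → t ≤ n → 1 ≤ y →
      μ {ω | Y t ω = y ∧ Y (t + 1) ω = y - 1} =
        ENNReal.ofReal (1 - ((y : ℝ) - 1) / ((n : ℝ) - t + 1)) * μ {ω | Y t ω = y})
    (T : Ω → ℕ) (hT : ∀ ω, T ω = sInf {t | 1 ≤ t ∧ Y (t + 1) ω = 0}) :
    (∫ ω, ((T ω : ℝ)) ∂μ) ≤
      (⌈(1 - 1 / Real.exp 1) * n + 2 - 1 / Real.exp 1⌉₊ : ℝ) :=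
  stmt_17_general μ n hn Y hmeas hY1 hstep hprob2 T hT
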